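/- arXiv:2205.05118 — 4 statements merged into one kernel-verified Lean document; each statement's English description precedes it below -/
import Mathlib

section
/- Let q be an odd prime power with q ≡ 1 (mod 4). Then PGL(2,F_q) contains a subgroup of order 12 (isomorphic to Alt(4)) every element of which maps some 3-element subset of ℙ¹(F_q) onto itself; in particular, PGL(2,F_q) has an intersecting subset of size 12 with respect to the induced action on 3-element subsets of ℙ¹(F_q). -/
open scoped Pointwise MatrixGroups

noncomputable section

/-- The projective line over `K`. -/
abbrev Proj (K : Type*) [Field K] := Projectivization K (Fin 2 → K)

variable {K : Type*} [Field K]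

lemma GLmulVecLin_injective (g : GL (Fin 2) K) :
    Function.Injective ((g : Matrix (Fin 2) (Fin 2) K).mulVecLin) := by
  intro u v huv
  have h := congrArg ((((g⁻¹ : GL (Fin 2) K) : Matrix (Fin 2) (Fin 2) K)).mulVecLin) huv
  simp only [Matrix.mulVecLin_apply, Matrix.mulVec_mulVec] at h
  rw [show ((g⁻¹ : GL (Fin 2) K) : Matrix (Fin 2) (Fin 2) K) * (g : Matrix (Fin 2) (Fin 2) K) = 1
    from g.inv_mul, Matrix.one_mulVec, Matrix.one_mulVec] at h
  exact h

lemma GLmulVec_ne_zero (g : GL (Fin 2) K) {v : Fin 2 → K} (hv : v ≠ 0) :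
    (g : Matrix (Fin 2) (Fin 2) K).mulVec v ≠ 0 := by
  intro h
  apply hv
  have : ((g : Matrix (Fin 2) (Fin 2) K)).mulVecLin v =
      ((g : Matrix (Fin 2) (Fin 2) K)).mulVecLin 0 := by
    simpa [Matrix.mulVecLin_apply] using h
  simpa using GLmulVecLin_injective g this

/-- The action of `GL(2,K)` on the projective line by matrix-vector multiplication on
representatives. -/
instance GLProjAction : MulAction (GL (Fin 2) K) (Proj K) where
  smul g x := Projectivization.map ((g : Matrix (Fin 2) (Fin 2) K).mulVecLin)
    (GLmulVecLin_injective g) x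
  one_smul x := by
    induction x using Projectivization.ind with
    | h v hv =>
      show Projectivization.map _ _ _ = _
      simp [Projectivization.map_mk]
  mul_smul g h x := by
    induction x using Projectivization.ind with
    | h v hv =>
      show Projectivization.map _ _ _ =
        Projectivization.map _ _ (Projectivization.map _ _ _)
      simp [Projectivization.map_mk, Matrix.mulVecLin_apply, Matrix.mulVec_mulVec,
        Units.val_mul]

lemma GL_smul_mk (g : GL (Fin 2) K) (v : Fin 2 → K) (hv : v ≠ 0) :
    g • Projectivization.mk K v hv =
      Projectivization.mk K ((g : Matrix (Fin 2) (Fin 2) K).mulVec v)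
        (GLmulVec_ne_zero g hv) := by
  show Projectivization.map _ _ _ = _
  simp [Projectivization.map_mk, Matrix.mulVecLin_apply]

/-- The action of `SL(2,K)` on the projective line. -/
instance SLProjAction : MulAction (Matrix.SpecialLinearGroup (Fin 2) K) (Proj K) :=
  MulAction.compHom _ (Matrix.SpecialLinearGroup.toGL)

end

noncomputable section
variable {K : Type*} [Field K]

lemma center_smul_eq (c : GL (Fin 2) K) (hc : c ∈ Subgroup.center (GL (Fin 2) K))
    (x : Proj K) : c • x = x := by
  have hcomm : ∀ t : Matrix.TransvectionStruct (Fin 2) K,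
      Commute t.toMatrix (c : Matrix (Fin 2) (Fin 2) K) := by
    intro t
    let u : GL (Fin 2) K := ⟨t.toMatrix, t.inv.toMatrix, t.mul_inv, t.inv_mul⟩
    have h := Subgroup.mem_center_iff.mp hc u
    have := congrArg Units.val h
    simpa [u, Commute, SemiconjBy] using this
  obtain ⟨r, hr⟩ := Matrix.mem_range_scalar_of_commute_transvectionStruct hcomm
  have hr0 : r ≠ 0 := by
    intro h0
    have hne : (![1, 0] : Fin 2 → K) ≠ 0 := by
      intro h
      have := congrFun h 0
      simp at this
    have := GLmulVec_ne_zero c hne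
    rw [← hr, h0] at this
    rw [show (0 : K) = (0 : K) from rfl] at this
    apply this
    funext i
    simp [Matrix.mulVec_diagonal]
  induction x using Projectivization.ind with
  | h v hv =>
    rw [GL_smul_mk]
    rw [Projectivization.mk_eq_mk_iff]
    refine ⟨Units.mk0 r hr0, ?_⟩
    rw [← hr]
    funext i
    simp [Matrix.mulVec_diagonal]

end

noncomputable section

/-- The projective general linear group `PGL(2,K) = GL(2,K)/Z(GL(2,K))`. -/
abbrev PGL2 (K : Type*) [Field K] : Type _ :=
  GL (Fin 2) K ⧸ Subgroup.center (GL (Fin 2) K)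

variable {K : Type*} [Field K]

/-- The action of `GL(2,K)` on the projective line descends to `PGL(2,K)`. -/
instance PGLProjSMul : SMul (PGL2 K) (Proj K) :=
  ⟨fun g x => Quotient.liftOn' g (fun a => a • x) (by
    intro a b hab
    rw [QuotientGroup.leftRel_apply] at hab
    show a • x = b • x
    have hb : b = a * (a⁻¹ * b) := by group
    rw [hb, mul_smul, center_smul_eq _ hab])⟩

instance PGLProjAction : MulAction (PGL2 K) (Proj K) where
  one_smul x := center_smul_eq 1 (Subgroup.one_mem _) x
  mul_smul g h x := by
    induction g using Quotient.inductionOn' with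
    | h a =>
      induction h using Quotient.inductionOn' with
      | h b => exact mul_smul a b x

lemma PGL2_smul_mk' (a : GL (Fin 2) K) (x : Proj K) :
    (QuotientGroup.mk a : PGL2 K) • x = a • x := rfl

/-- The natural homomorphism `SL(2,K) → PGL(2,K)`. -/
def SLtoPGL2 (K : Type*) [Field K] : Matrix.SpecialLinearGroup (Fin 2) K →* PGL2 K :=
  (QuotientGroup.mk' (Subgroup.center (GL (Fin 2) K))).comp Matrix.SpecialLinearGroup.toGL

/-- `PSL(2,K)`, realized as the image of `SL(2,K)` in `PGL(2,K)`. -/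
def PSL2 (K : Type*) [Field K] : Subgroup (PGL2 K) := (SLtoPGL2 K).range

/-- A subset `F` of a group `G` acting on the projective line over `K` is *intersecting for the
action on `k`-element subsets* if any two of its elements agree on some `k`-element subset of
the projective line. -/
def IntersectingOnSubsets (G : Type*) [Group G] (K : Type*) [Field K]
    [MulAction G (Proj K)] (k : ℕ) (F : Set G) : Prop :=
  ∀ g ∈ F, ∀ h ∈ F, ∃ S : Set (Proj K), S.ncard = k ∧ g • S = h • S

end

/-!
Suppose `i² = -1` and `2 ≠ 0` in `K`. The Möbius maps `b : z ↦ 1 / z` and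
`c : z ↦ (z + 1) / (i z - i)` are rotations of the octahedron `{0, ∞, ±1, ±i}` in `ℙ¹(K)`, and
`b² = c³ = (bc)³ = 1` in `PGL(2, K)`: by Cayley–Hamilton a `2 × 2` matrix of trace `0` squares to a
scalar, and one with `tr² = det` cubes to a scalar. Since `Alt(4) = ⟨x, y ∣ x², y³, (xy)³⟩`, this
gives a homomorphism `Alt(4) → PGL(2, K)`, `x ↦ b`, `y ↦ c`. Every element of `Alt(4)` is
conjugate to `1`, `x`, `y` or `y²`, so the homomorphism is injective because `b` and `c` are not
scalar, and every element of its image stabilises a 3-subset of `ℙ¹(K)` because `b` stabilises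
`{0, 1, ∞}` and `c` permutes `∞ ↦ -i ↦ 1 ↦ ∞`. Two elements `g, h` of the image then agree on a
3-set stabilised by `h⁻¹ g`. Over `F_q` with `q ≡ 1 (mod 4)`, `-1` is a square.

The presentation of `Alt(4)` is a coset enumeration: in `⟨a, b ∣ a², b³, (ab)³⟩` the relations
`aba = b²ab²` and `ab²a = bab` show that the twelve words `bᶜ` and `bᵏabᶜ` (`k, c < 3`) are closed
under left multiplication by the generators, and they map bijectively onto `Alt(4)`.
-/

namespace AlternatingFour

open Equiv

variable {G : Type*} [Group G] {a b : G}

def word (a b : G) : Fin 3 ⊕ Fin 3 × Fin 3 → G :=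
  Sum.elim (fun c ↦ b ^ (c : ℕ)) (fun kc ↦ b ^ (kc.1 : ℕ) * a * b ^ (kc.2 : ℕ))

lemma pow_mem_range_word (hb : b ^ 3 = 1) (n : ℕ) : b ^ n ∈ Set.range (word a b) :=
  ⟨.inl ⟨n % 3, n.mod_lt three_pos⟩, by simp [word, ← pow_eq_pow_mod _ hb]⟩

lemma pow_mul_mul_pow_mem_range_word (hb : b ^ 3 = 1) (m n : ℕ) :
    b ^ m * a * b ^ n ∈ Set.range (word a b) :=
  ⟨.inr (⟨m % 3, m.mod_lt three_pos⟩, ⟨n % 3, n.mod_lt three_pos⟩),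
    by simp [word, ← pow_eq_pow_mod _ hb]⟩

lemma closure_subset_range_word (ha : a ^ 2 = 1) (hb : b ^ 3 = 1) (hab : (a * b) ^ 3 = 1) :
    (Subgroup.closure {a, b} : Set G) ⊆ Set.range (word a b) := by
  have ha' : a⁻¹ = a := inv_eq_of_mul_eq_one_right (by rw [← sq, ha])
  have hb' : b⁻¹ = b ^ 2 := inv_eq_of_mul_eq_one_right (by rw [← pow_succ', hb])
  have hb2 : (b ^ 2)⁻¹ = b := by rw [← hb', inv_inv]
  have haba : a * b * a = b ^ 2 * a * b ^ 2 := by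
    rw [← hb', ← ha', ← mul_inv_rev, ← mul_inv_rev, ha', eq_inv_iff_mul_eq_one, ← hab]
    simp only [pow_succ, pow_zero, one_mul, mul_assoc]
  have habba : a * b ^ 2 * a = b * a * b := by
    simpa [mul_assoc, ha', hb', hb2] using congrArg (·⁻¹) haba
  have hmul_a : ∀ t ∈ Set.range (word a b), a * t ∈ Set.range (word a b) := by
    rintro t ⟨c | ⟨k, c⟩, rfl⟩
    · simpa [word] using pow_mul_mul_pow_mem_range_word (a := a) hb 0 c
    · fin_cases k
      · convert pow_mem_range_word (a := a) hb c using 1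
        simp [word, ← mul_assoc, ← sq, ha]
      · convert pow_mul_mul_pow_mem_range_word hb 2 (2 + c) using 1
        simp only [word, Sum.elim_inr, pow_one, ← mul_assoc]
        rw [haba]
        group
      · convert pow_mul_mul_pow_mem_range_word hb 1 (1 + c) using 1
        simp only [word, Sum.elim_inr, ← mul_assoc]
        rw [habba]
        group
  have hmul_b : ∀ t ∈ Set.range (word a b), b * t ∈ Set.range (word a b) := by
    rintro t ⟨c | ⟨k, c⟩, rfl⟩
    · simpa [word, ← pow_succ'] using pow_mem_range_word (a := a) hb (c + 1)
    · simpa [word, ← mul_assoc, ← pow_succ'] using pow_mul_mul_pow_mem_range_word hb (k + 1) c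
  intro g hg
  induction hg using Subgroup.closure_induction_left with
  | one => simpa using pow_mem_range_word (a := a) hb 0
  | mul_left s hs t _ ht =>
    rcases hs with rfl | rfl
    exacts [hmul_a t ht, hmul_b t ht]
  | inv_mul_cancel s hs t _ ht =>
    rcases hs with rfl | rfl
    · rw [ha']
      exact hmul_a t ht
    · rw [hb', sq, mul_assoc]
      exact hmul_b _ (hmul_b t ht)

def x : alternatingGroup (Fin 4) :=
  ⟨swap 0 1 * swap 2 3, Perm.mem_alternatingGroup.mpr (by decide)⟩

def y : alternatingGroup (Fin 4) :=
  ⟨swap 0 1 * swap 1 2, Perm.mem_alternatingGroup.mpr (by decide)⟩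

lemma x_sq : x ^ 2 = 1 := by decide

lemma y_pow_three : y ^ 3 = 1 := by decide

lemma x_mul_y_pow_three : (x * y) ^ 3 = 1 := by decide

lemma word_x_y_bijective : Function.Bijective (word x y) := by
  unfold Function.Bijective Function.Injective Function.Surjective
  decide

lemma isConj_one_or_x_or_y_or_y_sq (σ : alternatingGroup (Fin 4)) :
    IsConj σ 1 ∨ IsConj σ x ∨ IsConj σ y ∨ IsConj σ (y ^ 2) := by
  simp only [isConj_iff]
  revert σ
  decide

def rels : Set (FreeGroup Bool) := {.of false ^ 2, .of true ^ 3, (.of false * .of true) ^ 3}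

lemma lift_eq_one_of_mem_rels (ha : a ^ 2 = 1) (hb : b ^ 3 = 1) (hab : (a * b) ^ 3 = 1) :
    ∀ r ∈ rels, FreeGroup.lift (fun s ↦ if s then b else a) r = 1 := by
  rintro r (rfl | rfl | rfl) <;> simpa

def presentedLift (ha : a ^ 2 = 1) (hb : b ^ 3 = 1) (hab : (a * b) ^ 3 = 1) :
    PresentedGroup rels →* G :=
  PresentedGroup.toGroup (lift_eq_one_of_mem_rels ha hb hab)

lemma presentedLift_bijective :
    Function.Bijective (presentedLift x_sq y_pow_three x_mul_y_pow_three) := by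
  set π := presentedLift x_sq y_pow_three x_mul_y_pow_three
  set X : PresentedGroup rels := .of false
  set Y : PresentedGroup rels := .of true
  have hcomp : π ∘ word X Y = word x y := by
    ext (c | ⟨k, c⟩) <;> simp [word, π, X, Y, presentedLift]
  have hX : X ^ 2 = 1 := by
    simpa [X, PresentedGroup.of] using
      PresentedGroup.one_of_mem (show FreeGroup.of false ^ 2 ∈ rels from .inl rfl)
  have hY : Y ^ 3 = 1 := by
    simpa [Y, PresentedGroup.of] using
      PresentedGroup.one_of_mem (show FreeGroup.of true ^ 3 ∈ rels from .inr (.inl rfl))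
  have hXY : (X * Y) ^ 3 = 1 := by
    simpa [X, Y, PresentedGroup.of] using PresentedGroup.one_of_mem
      (show (FreeGroup.of false * FreeGroup.of true) ^ 3 ∈ rels from .inr (.inr rfl))
  have hsurj : Function.Surjective (word X Y) := fun g ↦ closure_subset_range_word hX hY hXY <|
    PresentedGroup.generated_by rels _
      (fun s ↦ Subgroup.subset_closure (by cases s <;> simp [X, Y])) g
  have hbij : Function.Bijective (word X Y) :=
    ⟨.of_comp (f := π) (hcomp ▸ word_x_y_bijective.injective), hsurj⟩
  exact (Function.Bijective.of_comp_iff π hbij).mp (hcomp ▸ word_x_y_bijective)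

/-- The presentation `Alt(4) = ⟨x, y ∣ x², y³, (xy)³⟩`. -/
noncomputable def lift (ha : a ^ 2 = 1) (hb : b ^ 3 = 1) (hab : (a * b) ^ 3 = 1) :
    alternatingGroup (Fin 4) →* G :=
  (presentedLift ha hb hab).comp (MulEquiv.ofBijective _ presentedLift_bijective).symm.toMonoidHom

lemma lift_x (ha : a ^ 2 = 1) (hb : b ^ 3 = 1) (hab : (a * b) ^ 3 = 1) : lift ha hb hab x = a := by
  have : (MulEquiv.ofBijective _ presentedLift_bijective).symm x = .of false :=
    (MulEquiv.symm_apply_eq _).mpr (by simp [presentedLift, PresentedGroup.toGroup.of])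
  rw [lift, MonoidHom.comp_apply, MulEquiv.coe_toMonoidHom, this]
  exact PresentedGroup.toGroup.of _

lemma lift_y (ha : a ^ 2 = 1) (hb : b ^ 3 = 1) (hab : (a * b) ^ 3 = 1) : lift ha hb hab y = b := by
  have : (MulEquiv.ofBijective _ presentedLift_bijective).symm y = .of true :=
    (MulEquiv.symm_apply_eq _).mpr (by simp [presentedLift, PresentedGroup.toGroup.of])
  rw [lift, MonoidHom.comp_apply, MulEquiv.coe_toMonoidHom, this]
  exact PresentedGroup.toGroup.of _

lemma nat_card_eq_twelve : Nat.card (alternatingGroup (Fin 4)) = 12 := by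
  rw [Nat.card_eq_fintype_card]
  rfl

end AlternatingFour

section SmulSet

variable {G α : Type*} [Group G] [MulAction G α] {k : ℕ}

lemma exists_ncard_eq_smul_eq_of_isConj {g h : G} (hgh : IsConj g h)
    (hg : ∃ S : Set α, S.ncard = k ∧ g • S = S) : ∃ S : Set α, S.ncard = k ∧ h • S = S := by
  obtain ⟨c, rfl⟩ := isConj_iff.mp hgh
  obtain ⟨S, hSk, hgS⟩ := hg
  refine ⟨c • S, by rw [Set.ncard_smul_set, hSk], ?_⟩
  rw [smul_smul, inv_mul_cancel_right, mul_smul, hgS]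

lemma exists_ncard_eq_pow_smul_eq {g : G} (n : ℕ) (hg : ∃ S : Set α, S.ncard = k ∧ g • S = S) :
    ∃ S : Set α, S.ncard = k ∧ g ^ n • S = S := by
  obtain ⟨S, hSk, hgS⟩ := hg
  exact ⟨S, hSk, (MulAction.stabilizer G S).pow_mem hgS n⟩

lemma exists_ncard_eq_three_smul_eq {g : G} {p q r : α} (hpq : p ≠ q) (hpr : p ≠ r) (hqr : q ≠ r)
    (h : g • ({p, q, r} : Set α) ⊆ {p, q, r}) : ∃ S : Set α, S.ncard = 3 ∧ g • S = S :=
  ⟨{p, q, r}, Set.ncard_eq_three.mpr ⟨p, q, r, hpq, hpr, hqr, rfl⟩,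
    Set.eq_of_subset_of_ncard_le h (Set.ncard_smul_set g _).ge (by simp)⟩

end SmulSet

lemma intersectingOnSubsets_of_forall_exists_smul_eq {G K : Type*} [Group G] [Field K]
    [MulAction G (Proj K)] {k : ℕ} (U : Subgroup G)
    (hU : ∀ g ∈ U, ∃ S : Set (Proj K), S.ncard = k ∧ g • S = S) :
    IntersectingOnSubsets G K k U := by
  intro g hg h hh
  obtain ⟨S, hSk, hS⟩ := hU (h⁻¹ * g) (U.mul_mem (U.inv_mem hh) hg)
  refine ⟨S, hSk, ?_⟩
  calc g • S = h • (h⁻¹ * g) • S := by rw [smul_smul, mul_inv_cancel_left]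
    _ = h • S := by rw [hS]

namespace Matrix

variable {R : Type*} [CommRing R]

lemma sq_fin_two_eq (M : Matrix (Fin 2) (Fin 2) R) : M ^ 2 = M.trace • M - M.det • 1 := by
  ext j k
  fin_cases j <;> fin_cases k <;>
    simp [sq, mul_apply, Fin.sum_univ_two, trace_fin_two, det_fin_two] <;> ring

lemma sq_eq_smul_one_of_trace_eq_zero {M : Matrix (Fin 2) (Fin 2) R} (h : M.trace = 0) :
    M ^ 2 = (-M.det) • 1 := by
  rw [sq_fin_two_eq, h, zero_smul, zero_sub, neg_smul]

lemma pow_three_eq_smul_one_of_trace_sq_eq_det {M : Matrix (Fin 2) (Fin 2) R}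
    (h : M.trace ^ 2 = M.det) : M ^ 3 = (-(M.trace * M.det)) • 1 := by
  calc M ^ 3 = (M.trace • M - M.det • 1) * M := by rw [pow_succ, sq_fin_two_eq]
    _ = M.trace • M ^ 2 - M.det • M := by rw [sub_mul, smul_mul_assoc, smul_mul_assoc, one_mul, sq]
    _ = (M.trace ^ 2 - M.det) • M - (M.trace * M.det) • 1 := by rw [sq_fin_two_eq]; module
    _ = (-(M.trace * M.det)) • 1 := by rw [h, sub_self, zero_smul, zero_sub, neg_smul]

end Matrix

section PGL2

open Matrix Matrix.GeneralLinearGroup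

variable {K : Type*} [Field K]

lemma mk_eq_one_of_val_eq_smul_one {g : GL (Fin 2) K} (r : K)
    (h : (g : Matrix (Fin 2) (Fin 2) K) = r • 1) : (g : PGL2 K) = 1 :=
  (QuotientGroup.eq_one_iff g).mpr <| mem_center_iff_val_mem_range_scalar.mpr
    ⟨r, by rw [h, smul_one_eq_diagonal]; rfl⟩

lemma mk_ne_one_of_apply_zero_one_ne_zero {g : GL (Fin 2) K}
    (h : (g : Matrix (Fin 2) (Fin 2) K) 0 1 ≠ 0) : (g : PGL2 K) ≠ 1 := by
  rw [Ne, QuotientGroup.eq_one_iff, mem_center_iff_val_mem_range_scalar]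
  rintro ⟨r, hr⟩
  simp [← hr] at h

lemma mk_sq_eq_one_of_trace_eq_zero {g : GL (Fin 2) K}
    (h : (g : Matrix (Fin 2) (Fin 2) K).trace = 0) : (g : PGL2 K) ^ 2 = 1 := by
  rw [← QuotientGroup.mk_pow]
  exact mk_eq_one_of_val_eq_smul_one _ (by rw [Units.val_pow_eq_pow_val,
    sq_eq_smul_one_of_trace_eq_zero h])

lemma mk_pow_three_eq_one_of_trace_sq_eq_det {g : GL (Fin 2) K}
    (h : (g : Matrix (Fin 2) (Fin 2) K).trace ^ 2 = (g : Matrix (Fin 2) (Fin 2) K).det) :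
    (g : PGL2 K) ^ 3 = 1 := by
  rw [← QuotientGroup.mk_pow]
  exact mk_eq_one_of_val_eq_smul_one _ (by rw [Units.val_pow_eq_pow_val,
    pow_three_eq_smul_one_of_trace_sq_eq_det h])

lemma mk_smul_mk_eq {g : GL (Fin 2) K} {v w : Fin 2 → K} (hv : v ≠ 0) (hw : w ≠ 0) (r : K)
    (h₀ : ((g : Matrix (Fin 2) (Fin 2) K) *ᵥ v) 0 = r * w 0)
    (h₁ : ((g : Matrix (Fin 2) (Fin 2) K) *ᵥ v) 1 = r * w 1) :
    (g : PGL2 K) • Projectivization.mk K v hv = Projectivization.mk K w hw := by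
  rw [PGL2_smul_mk', GL_smul_mk, Projectivization.mk_eq_mk_iff']
  exact ⟨r, funext <| Fin.forall_fin_two.mpr ⟨h₀.symm, h₁.symm⟩⟩

lemma mk_ne_mk_of_mul_ne_mul {v w : Fin 2 → K} (hv : v ≠ 0) (hw : w ≠ 0)
    (h : v 0 * w 1 ≠ v 1 * w 0) : Projectivization.mk K v hv ≠ Projectivization.mk K w hw := by
  rw [Ne, Projectivization.mk_eq_mk_iff']
  rintro ⟨r, rfl⟩
  apply h
  simp only [Pi.smul_apply, smul_eq_mul]
  ring

end PGL2

section Tetrahedral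

open Matrix Matrix.GeneralLinearGroup

variable {K : Type*} [Field K] {i : K}

variable (K) in
noncomputable def reciprocalGL : GL (Fin 2) K :=
  mkOfDetNeZero !![0, 1; 1, 0] (by simp [det_fin_two])

lemma reciprocal_sq : (reciprocalGL K : PGL2 K) ^ 2 = 1 :=
  mk_sq_eq_one_of_trace_eq_zero (by simp [reciprocalGL, trace_fin_two])

lemma exists_ncard_eq_three_reciprocal_smul_eq :
    ∃ S : Set (Proj K), S.ncard = 3 ∧ (reciprocalGL K : PGL2 K) • S = S := by
  have h10 : ![(1 : K), 0] ≠ 0 := by simp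
  have h01 : ![(0 : K), 1] ≠ 0 := by simp
  have h11 : ![(1 : K), 1] ≠ 0 := by simp
  refine exists_ncard_eq_three_smul_eq (mk_ne_mk_of_mul_ne_mul h10 h01 (by simp))
    (mk_ne_mk_of_mul_ne_mul h10 h11 (by simp)) (mk_ne_mk_of_mul_ne_mul h01 h11 (by simp)) ?_
  rw [Set.smul_set_insert, Set.smul_set_insert, Set.smul_set_singleton,
    mk_smul_mk_eq h10 h01 1 (by simp [reciprocalGL]) (by simp [reciprocalGL]),
    mk_smul_mk_eq h01 h10 1 (by simp [reciprocalGL]) (by simp [reciprocalGL]),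
    mk_smul_mk_eq h11 h11 1 (by simp [reciprocalGL]) (by simp [reciprocalGL])]
  simp [Set.insert_subset_iff]

variable (hi : i * i = -1) [NeZero (2 : K)]

noncomputable def rotationGL : GL (Fin 2) K :=
  mkOfDetNeZero !![1, 1; i, -i] (by
    have hi0 : i ≠ 0 := by rintro rfl; simp at hi
    rw [det_fin_two_of]
    intro h
    exact mul_ne_zero two_ne_zero hi0 (by linear_combination -h))

lemma rotation_pow_three : (rotationGL hi : PGL2 K) ^ 3 = 1 :=
  mk_pow_three_eq_one_of_trace_sq_eq_det (by
    simp [rotationGL, trace_fin_two, det_fin_two]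
    linear_combination hi)

lemma reciprocal_mul_rotation_pow_three :
    ((reciprocalGL K : PGL2 K) * rotationGL hi) ^ 3 = 1 := by
  rw [← QuotientGroup.mk_mul]
  exact mk_pow_three_eq_one_of_trace_sq_eq_det (by
    simp [reciprocalGL, rotationGL, trace_fin_two, det_fin_two]
    linear_combination hi)

lemma exists_ncard_eq_three_rotation_smul_eq :
    ∃ S : Set (Proj K), S.ncard = 3 ∧ (rotationGL hi : PGL2 K) • S = S := by
  have h10 : ![(1 : K), 0] ≠ 0 := by simp
  have h11 : ![(1 : K), 1] ≠ 0 := by simp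
  have hi1 : ![-i, 1] ≠ 0 := by simp
  refine exists_ncard_eq_three_smul_eq (mk_ne_mk_of_mul_ne_mul h10 h11 (by simp))
    (mk_ne_mk_of_mul_ne_mul h10 hi1 (by simp)) (mk_ne_mk_of_mul_ne_mul h11 hi1 ?_) ?_
  · intro h
    simp only [Matrix.cons_val_zero, Matrix.cons_val_one, one_mul, mul_one] at h
    exact two_ne_zero (α := K) (by linear_combination (1 - i) * h + hi)
  rw [Set.smul_set_insert, Set.smul_set_insert, Set.smul_set_singleton,
    mk_smul_mk_eq h10 hi1 i (by simp [rotationGL]; linear_combination hi) (by simp [rotationGL]),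
    mk_smul_mk_eq h11 h10 2 (by simp [rotationGL]; ring) (by simp [rotationGL]),
    mk_smul_mk_eq hi1 h11 (1 - i) (by simp [rotationGL]; ring)
      (by simp [rotationGL]; linear_combination -hi)]
  simp [Set.insert_subset_iff]

noncomputable def tetrahedralHom : alternatingGroup (Fin 4) →* PGL2 K :=
  AlternatingFour.lift reciprocal_sq (rotation_pow_three hi) (reciprocal_mul_rotation_pow_three hi)

lemma tetrahedralHom_injective : Function.Injective (tetrahedralHom hi) := by
  have hx : tetrahedralHom hi AlternatingFour.x ≠ 1 := by
    rw [tetrahedralHom, AlternatingFour.lift_x]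
    exact mk_ne_one_of_apply_zero_one_ne_zero (by simp [reciprocalGL])
  have hy : tetrahedralHom hi AlternatingFour.y ≠ 1 := by
    rw [tetrahedralHom, AlternatingFour.lift_y]
    exact mk_ne_one_of_apply_zero_one_ne_zero (by simp [rotationGL])
  have hy2 : tetrahedralHom hi (AlternatingFour.y ^ 2) ≠ 1 := by
    intro h
    apply hy
    rw [show AlternatingFour.y = (AlternatingFour.y ^ 2) ^ 2 by decide, map_pow, h, one_pow]
  refine (injective_iff_map_eq_one _).mpr fun σ hσ ↦ ?_
  have hconj : ∀ τ, IsConj σ τ → tetrahedralHom hi τ = 1 := fun τ h ↦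
    isConj_one_right.mp (hσ ▸ (tetrahedralHom hi).map_isConj h)
  rcases AlternatingFour.isConj_one_or_x_or_y_or_y_sq σ with h | h | h | h
  exacts [isConj_one_left.mp h, (hx (hconj _ h)).elim, (hy (hconj _ h)).elim,
    (hy2 (hconj _ h)).elim]

lemma exists_ncard_eq_three_tetrahedralHom_smul_eq (σ : alternatingGroup (Fin 4)) :
    ∃ S : Set (Proj K), S.ncard = 3 ∧ tetrahedralHom hi σ • S = S := by
  have hy := exists_ncard_eq_three_rotation_smul_eq hi
  rcases AlternatingFour.isConj_one_or_x_or_y_or_y_sq σ with h | h | h | h <;>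
    refine exists_ncard_eq_smul_eq_of_isConj ((tetrahedralHom hi).map_isConj h.symm) ?_
  · simpa using exists_ncard_eq_pow_smul_eq 0 hy
  · rw [tetrahedralHom, AlternatingFour.lift_x]
    exact exists_ncard_eq_three_reciprocal_smul_eq
  · rwa [tetrahedralHom, AlternatingFour.lift_y]
  · rw [map_pow, tetrahedralHom, AlternatingFour.lift_y]
    exact exists_ncard_eq_pow_smul_eq 2 hy

end Tetrahedral

open scoped Pointwise in
set_option synthInstance.maxHeartbeats 1000000 in
/-- For an odd prime power `q ≡ 1 (mod 4)`, the group `PGL(2, F_q)` contains a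
subgroup of order 12 isomorphic to `Alt(4)` each of whose elements fixes a 3-element subset of
the projective line; in particular there is an intersecting subset of size 12 for the action on
3-element subsets. -/
theorem pgl2_alt4_intersecting_subgroup (p m : ℕ) [Fact p.Prime] (hp : Odd p) (hm : 1 ≤ m)
    (hq : p ^ m % 4 = 1) :
    ∃ U : Subgroup (PGL2 (GaloisField p m)),
      Nat.card U = 12 ∧
      Nonempty (U ≃* alternatingGroup (Fin 4)) ∧
      (∀ g ∈ U, ∃ S : Set (Proj (GaloisField p m)), S.ncard = 3 ∧ g • S = S) ∧
      IntersectingOnSubsets _ (GaloisField p m) 3 (U : Set (PGL2 (GaloisField p m))) := by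
  have : NeZero (2 : GaloisField p m) := ⟨Ring.two_ne_zero <| by
    rw [ringChar.eq (GaloisField p m) p]
    rintro rfl
    exact Nat.not_even_iff_odd.mpr hp even_two⟩
  have : Fintype (GaloisField p m) := Fintype.ofFinite _
  obtain ⟨i, hi⟩ : IsSquare (-1 : GaloisField p m) := by
    rw [FiniteField.isSquare_neg_one_iff, ← Nat.card_eq_fintype_card,
      GaloisField.card p m (by omega), hq]
    decide
  set ρ := tetrahedralHom hi.symm
  have hfix : ∀ g ∈ ρ.range, ∃ S : Set (Proj (GaloisField p m)), S.ncard = 3 ∧ g • S = S := by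
    rintro _ ⟨σ, rfl⟩
    exact exists_ncard_eq_three_tetrahedralHom_smul_eq hi.symm σ
  have e := MonoidHom.ofInjective (tetrahedralHom_injective hi.symm)
  refine ⟨ρ.range, ?_, ⟨e.symm⟩, hfix, intersectingOnSubsets_of_forall_exists_smul_eq _ hfix⟩
  rw [← Nat.card_congr e.toEquiv, AlternatingFour.nat_card_eq_twelve]
end

section
/- Let q = 2^m with m ≥ 1 and F_q = GaloisField 2 m. Then the maximum size of an intersecting subset of SL(2,F_q) with respect to the induced action on 2-element subsets of ℙ¹(F_q) is exactly q(q − 1). (Since the stabilizer of a 2-subset has order 2(q − 1), this says the intersection density of this action is q/2.) -/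
open scoped Pointwise MatrixGroups

/-!
The stabilizer `B` of `∞ = [1 : 0]` in `SL(2, q)` has order `q (q - 1)` and is intersecting:
in characteristic `2` an upper triangular element of determinant `1` either has a second fixed
point or is an involution, and either way it stabilizes a pair of points.

For the upper bound, let `C` be the group of norm-one elements of `𝔽_{q²}`, acting on
`𝔽_{q²} ≅ 𝔽_q²` by multiplication. It embeds in `SL(2, q)`, acts freely on the projective line
(an eigenvector would force the element into `𝔽_q`, where norm one means `λ² = 1`), has no
involutions, and is transitive because every element of `𝔽_q` is a square. A nontrivial element
of `C` stabilizing a pair would swap it, and its square would fix a point; so an intersecting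
family meets each coset `g C` at most once, and since every coset meets `B`, it has at most
`|B|` elements.
-/

open MulAction

section PairStabilizers

variable {G X : Type*} [Group G] [MulAction G X]

lemma smul_pair_eq_of_smul_eq {c : G} {y z : X} (hy : c • y = y) (hz : c • z = z) :
    c • ({y, z} : Set X) = {y, z} := by
  rw [Set.smul_set_insert, Set.smul_set_singleton, hy, hz]

lemma exists_ncard_eq_two_smul_eq_of_mul_self_eq_one [Nontrivial X] {c : G} (hc : c * c = 1) :
    ∃ S : Set X, S.ncard = 2 ∧ c • S = S := by
  obtain ⟨y, z, hyz⟩ := exists_pair_ne X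
  have hswap (x : X) : c • ({x, c • x} : Set X) = {x, c • x} := by
    rw [Set.smul_set_insert, Set.smul_set_singleton, smul_smul, hc, one_smul, Set.pair_comm]
  by_cases hy : c • y = y
  · by_cases hz : c • z = z
    · exact ⟨{y, z}, Set.ncard_pair hyz, smul_pair_eq_of_smul_eq hy hz⟩
    · exact ⟨{z, c • z}, Set.ncard_pair (Ne.symm hz), hswap z⟩
  · exact ⟨{y, c • y}, Set.ncard_pair (Ne.symm hy), hswap y⟩

lemma smul_eq_self_or_mul_self_smul_eq_self {c : G} {y z : X}
    (h : c • ({y, z} : Set X) = {y, z}) : c • y = y ∨ (c * c) • y = y := by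
  have hmem (x : X) (hx : x ∈ ({y, z} : Set X)) : c • x = y ∨ c • x = z := by
    simpa [h] using Set.smul_mem_smul_set (a := c) hx
  rcases hmem y (by simp) with hy | hy
  · exact .inl hy
  · rcases hmem z (by simp) with hz | hz
    · exact .inr (by rw [mul_smul, hy, hz])
    · exact .inl (hy.trans (smul_left_cancel c (hy.trans hz.symm)).symm)

lemma Subgroup.eq_one_of_smul_eq_of_ncard_eq_two {C : Subgroup G}
    (hfree : ∀ c ∈ C, ∀ y : X, c • y = y → c = 1) (hinv : ∀ c ∈ C, c * c = 1 → c = 1)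
    {c : G} (hc : c ∈ C) {S : Set X} (hS : S.ncard = 2) (hcS : c • S = S) : c = 1 := by
  obtain ⟨y, z, -, rfl⟩ := Set.ncard_eq_two.mp hS
  rcases smul_eq_self_or_mul_self_smul_eq_self hcS with hy | hy
  · exact hfree c hc y hy
  · exact hinv c hc (hfree _ (C.mul_mem hc hc) y hy)

end PairStabilizers

section Intersecting

variable {G : Type*} [Group G] {K : Type*} [Field K] [MulAction G (Proj K)]

lemma IntersectingOnSubsets.of_subgroup {k : ℕ} {H : Subgroup G}
    (hH : ∀ c ∈ H, ∃ S : Set (Proj K), S.ncard = k ∧ c • S = S) :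
    IntersectingOnSubsets G K k H := by
  intro g hg h hh
  obtain ⟨S, hSk, hS⟩ := hH (h⁻¹ * g) (H.mul_mem (H.inv_mem hh) hg)
  refine ⟨S, hSk, ?_⟩
  nth_rewrite 2 [← hS]
  rw [smul_smul, mul_inv_cancel_left]

lemma IntersectingOnSubsets.ncard_le_card_stabilizer [Finite G] {C : Subgroup G}
    [IsPretransitive C (Proj K)] (hfree : ∀ c ∈ C, ∀ y : Proj K, c • y = y → c = 1)
    (hinv : ∀ c ∈ C, c * c = 1 → c = 1) (x₀ : Proj K) {F : Set G}
    (hF : IntersectingOnSubsets G K 2 F) : F.ncard ≤ Nat.card (stabilizer G x₀) := by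
  choose c hc using fun g : G => exists_smul_eq C x₀ (g⁻¹ • x₀)
  rw [← Nat.card_coe_set_eq]
  refine Set.ncard_le_ncard_of_injOn (fun g => g * c g) (fun g _ => ?_) (fun g hg h hh hgh => ?_)
    (Set.toFinite _)
  · rw [SetLike.mem_coe, mem_stabilizer_iff, mul_smul, ← Subgroup.smul_def, hc, smul_inv_smul]
  · obtain ⟨S, hS, hgh'⟩ := hF g hg h hh
    have hmem : h⁻¹ * g ∈ C := by
      rw [show h⁻¹ * g = (c h : G) * (c g : G)⁻¹ by
        rw [inv_mul_eq_iff_eq_mul, ← mul_assoc, eq_mul_inv_iff_mul_eq]; exact hgh]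
      exact C.mul_mem (c h).2 (C.inv_mem (c g).2)
    have hone := C.eq_one_of_smul_eq_of_ncard_eq_two hfree hinv hmem hS
      (by rw [mul_smul, hgh', inv_smul_smul])
    rwa [inv_mul_eq_one, eq_comm] at hone

end Intersecting

section SL2

open Matrix Projectivization

variable {K : Type*} [Field K]

lemma SL_smul_mk (g : SpecialLinearGroup (Fin 2) K) (v : Fin 2 → K) (hv : v ≠ 0) :
    g • mk K v hv = mk K ((g : Matrix (Fin 2) (Fin 2) K) *ᵥ v) (GLmulVec_ne_zero g.toGL hv) := by
  rw [MulAction.compHom_smul_def, GL_smul_mk]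
  rfl

lemma vecCons_ne_zero_of_ne_zero (x y : K) (hy : y ≠ 0) : ![x, y] ≠ 0 :=
  fun h => hy (congrFun h 1)

lemma det_eq_mul_of_lower_left_eq_zero (g : SpecialLinearGroup (Fin 2) K) (h : g 1 0 = 0) :
    g 0 0 * g 1 1 = 1 := by
  have := g.det_coe
  rwa [det_fin_two, h, mul_zero, sub_zero] at this

variable (K) in
def infinityPoint : Proj K :=
  mk K ![1, 0] fun h => one_ne_zero (congrFun h 0)

lemma mk_ne_infinityPoint (x y : K) (hy : y ≠ 0) :
    mk K ![x, y] (vecCons_ne_zero_of_ne_zero x y hy) ≠ infinityPoint K := by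
  rw [infinityPoint, Ne, mk_eq_mk_iff K]
  rintro ⟨u, hu⟩
  exact hy (by simpa [Units.smul_def] using (congrFun hu 1).symm)

lemma mem_stabilizer_infinityPoint_iff (g : SpecialLinearGroup (Fin 2) K) :
    g ∈ stabilizer _ (infinityPoint K) ↔ g 1 0 = 0 := by
  rw [mem_stabilizer_iff, infinityPoint, SL_smul_mk]
  refine (mk_eq_mk_iff K _ _ _ _).trans ?_
  constructor
  · rintro ⟨u, hu⟩
    simpa [Units.smul_def, mulVec, dotProduct] using (congrFun hu 1).symm
  · intro h
    have hdet := det_eq_mul_of_lower_left_eq_zero g h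
    refine ⟨Units.mk0 (g 0 0) (left_ne_zero_of_mul_eq_one hdet), funext fun i => ?_⟩
    fin_cases i <;> simp [Units.smul_def, mulVec, dotProduct, h]

variable (K) in
def stabilizerInfinityPointEquiv :
    stabilizer (SpecialLinearGroup (Fin 2) K) (infinityPoint K) ≃ Kˣ × K where
  toFun g := (Units.mk0 (g.1 0 0) (left_ne_zero_of_mul_eq_one
    (det_eq_mul_of_lower_left_eq_zero g.1 ((mem_stabilizer_infinityPoint_iff _).mp g.2))), g.1 0 1)
  invFun p := ⟨⟨!![(p.1 : K), p.2; 0, (p.1⁻¹ : Kˣ)], by simp [det_fin_two_of]⟩,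
    (mem_stabilizer_infinityPoint_iff _).mpr rfl⟩
  left_inv g := by
    have h := (mem_stabilizer_infinityPoint_iff _).mp g.2
    have hdet := det_eq_mul_of_lower_left_eq_zero g.1 h
    ext i j
    fin_cases i <;> fin_cases j <;> simp [h, eq_inv_of_mul_eq_one_right hdet]
  right_inv p := by ext <;> simp

lemma card_stabilizer_infinityPoint [Finite K] :
    Nat.card (stabilizer (SpecialLinearGroup (Fin 2) K) (infinityPoint K)) =
      Nat.card K * (Nat.card K - 1) := by
  rw [Nat.card_congr (stabilizerInfinityPointEquiv K), Nat.card_prod, Nat.card_units, mul_comm]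

lemma exists_ncard_eq_two_smul_eq_of_mem_stabilizer_infinityPoint [CharP K 2]
    {c : SpecialLinearGroup (Fin 2) K} (hc : c ∈ stabilizer _ (infinityPoint K)) :
    ∃ S : Set (Proj K), S.ncard = 2 ∧ c • S = S := by
  have h10 := (mem_stabilizer_infinityPoint_iff c).mp hc
  have hdet := det_eq_mul_of_lower_left_eq_zero c h10
  by_cases hdiag : c 0 0 = c 1 1
  · have hsq : c 0 0 ^ 2 = 1 ^ 2 := by
      linear_combination hdet + c 0 0 * hdiag
    have h00 : c 0 0 = 1 := CharTwo.sq_inj.mp hsq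
    have h11 : c 1 1 = 1 := hdiag ▸ h00
    have : Nontrivial (Proj K) := nontrivial_of_ne _ _ (mk_ne_infinityPoint 0 1 one_ne_zero)
    refine exists_ncard_eq_two_smul_eq_of_mul_self_eq_one ?_
    ext i j
    fin_cases i <;> fin_cases j <;>
      simp [mul_apply, Fin.sum_univ_two, h10, h00, h11, CharTwo.add_self_eq_zero]
  · have hne : c 1 1 - c 0 0 ≠ 0 := sub_ne_zero.mpr (Ne.symm hdiag)
    refine ⟨{infinityPoint K, mk K ![c 0 1, c 1 1 - c 0 0] (vecCons_ne_zero_of_ne_zero _ _ hne)},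
      Set.ncard_pair (mk_ne_infinityPoint _ _ hne).symm, smul_pair_eq_of_smul_eq hc ?_⟩
    rw [SL_smul_mk]
    refine (mk_eq_mk_iff K _ _ _ _).mpr
      ⟨Units.mk0 (c 1 1) (right_ne_zero_of_mul_eq_one hdet), funext fun i => ?_⟩
    fin_cases i
    · simp [Units.smul_def, mulVec, dotProduct]
      ring
    · simp [Units.smul_def, mulVec, dotProduct, h10]

end SL2

section NonsplitTorus

open Matrix Projectivization

variable {K L : Type*} [Field K] [Field L] [Algebra K L]

lemma norm_coe_of_mem_ker (x : (Units.map (Algebra.norm K : L →* K)).ker) :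
    Algebra.norm K ((x : Lˣ) : L) = 1 := by
  simpa using congrArg Units.val (MonoidHom.mem_ker.mp x.2)

noncomputable def normOneToSL (b : Module.Basis (Fin 2) K L) :
    (Units.map (Algebra.norm K : L →* K)).ker →* SpecialLinearGroup (Fin 2) K where
  toFun x := ⟨Algebra.leftMulMatrix b (x : Lˣ), by
    rw [← Algebra.norm_eq_matrix_det, norm_coe_of_mem_ker]⟩
  map_one' := Subtype.ext (by simp)
  map_mul' x y := Subtype.ext (map_mul (Algebra.leftMulMatrix b) ((x : Lˣ) : L) ((y : Lˣ) : L))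

variable (b : Module.Basis (Fin 2) K L)

@[simp]
lemma coe_normOneToSL (x : (Units.map (Algebra.norm K : L →* K)).ker) :
    (normOneToSL b x : Matrix (Fin 2) (Fin 2) K) = Algebra.leftMulMatrix b (x : Lˣ) :=
  rfl

lemma normOneToSL_injective : Function.Injective (normOneToSL b) :=
  fun _ _ hxy => Subtype.ext (Units.ext (Algebra.leftMulMatrix_injective b
    (congrArg Subtype.val hxy)))

lemma normOneToSL_smul_mk (x : (Units.map (Algebra.norm K : L →* K)).ker) {w : L} (hw : w ≠ 0) :
    normOneToSL b x • mk K (b.equivFun w) (b.equivFun.map_ne_zero_iff.mpr hw) =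
      mk K (b.equivFun ((x : Lˣ) * w))
        (b.equivFun.map_ne_zero_iff.mpr (mul_ne_zero (Units.ne_zero _) hw)) := by
  simp_rw [SL_smul_mk, coe_normOneToSL, Module.Basis.equivFun_apply,
    Algebra.leftMulMatrix_mulVec_repr]

lemma Proj.exists_eq_mk_equivFun (y : Proj K) :
    ∃ (w : L) (hw : w ≠ 0), y = mk K (b.equivFun w) (b.equivFun.map_ne_zero_iff.mpr hw) := by
  induction y using Projectivization.ind with
  | h v hv =>
    refine ⟨b.equivFun.symm v, b.equivFun.symm.map_ne_zero_iff.mpr hv, ?_⟩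
    simp only [LinearEquiv.apply_symm_apply]

variable [CharP K 2]

lemma eq_one_of_normOneToSL_smul_eq_self (x : (Units.map (Algebra.norm K : L →* K)).ker) {y : Proj K}
    (hy : normOneToSL b x • y = y) : x = 1 := by
  obtain ⟨w, hw, rfl⟩ := Proj.exists_eq_mk_equivFun b y
  rw [normOneToSL_smul_mk b x hw] at hy
  obtain ⟨u, hu⟩ := (mk_eq_mk_iff K _ _ _ _).mp hy
  have hxu : ((x : Lˣ) : L) = algebraMap K L u := by
    refine mul_right_cancel₀ hw (b.equivFun.injective ?_)
    rw [← hu, ← Algebra.smul_def, map_smul, Units.smul_def]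
  have hu1 : (u : K) = 1 := by
    have hnorm := norm_coe_of_mem_ker x
    rw [hxu, Algebra.norm_algebraMap,
      Module.finrank_eq_card_basis b, Fintype.card_fin] at hnorm
    exact CharTwo.sq_inj.mp (by rw [hnorm, one_pow])
  rw [hu1, map_one] at hxu
  exact Subtype.ext (Units.ext hxu)

lemma eq_one_of_normOneToSL_mul_self_eq_one (x : (Units.map (Algebra.norm K : L →* K)).ker)
    (hx : normOneToSL b x * normOneToSL b x = 1) : x = 1 := by
  have : CharP L 2 := charP_of_injective_algebraMap (algebraMap K L).injective 2
  have hxx : ((x : Lˣ) : L) ^ 2 = 1 ^ 2 := by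
    rw [← map_mul, ← map_one (normOneToSL b)] at hx
    rw [sq, one_pow, ← Units.val_mul, ← Subgroup.coe_mul, normOneToSL_injective b hx]
    rfl
  exact Subtype.ext (Units.ext (CharTwo.sq_inj.mp hxx))

/-- The witness is `w' / w` divided by a square root of its norm. -/
lemma exists_mem_ker_norm_mul_eq_smul [Finite K] (hL : Module.finrank K L = 2) {w w' : L}
    (hw : w ≠ 0) (hw' : w' ≠ 0) :
    ∃ x ∈ (Units.map (Algebra.norm K : L →* K)).ker, ∃ a : K, (x : L) * w = a • w' := by
  have hn : Algebra.norm K (w' / w) ≠ 0 :=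
    ((isUnit_iff_ne_zero.mpr (div_ne_zero hw' hw)).map (Algebra.norm K)).ne_zero
  obtain ⟨r, hr⟩ := FiniteField.isSquare_of_char_two (ringChar.eq K 2) (Algebra.norm K (w' / w))
  have hr0 : r ≠ 0 := by rintro rfl; exact hn (by rw [hr, mul_zero])
  refine ⟨Units.mk0 (algebraMap K L r⁻¹ * (w' / w)) (by simp [hr0, hw, hw']),
    MonoidHom.mem_ker.mpr (Units.ext ?_), r⁻¹, ?_⟩
  · rw [Units.coe_map, Units.val_mk0, map_mul, Algebra.norm_algebraMap, hL, hr, Units.val_one]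
    field_simp
  · rw [Units.val_mk0, Algebra.smul_def, mul_assoc, div_mul_cancel₀ _ hw]

lemma isPretransitive_range_normOneToSL [Finite K] :
    IsPretransitive (normOneToSL b).range (Proj K) := by
  refine ⟨fun y z => ?_⟩
  obtain ⟨w, hw, rfl⟩ := Proj.exists_eq_mk_equivFun b y
  obtain ⟨w', hw', rfl⟩ := Proj.exists_eq_mk_equivFun b z
  obtain ⟨x, hx, a, hxa⟩ := exists_mem_ker_norm_mul_eq_smul
    ((Module.finrank_eq_card_basis b).trans (Fintype.card_fin 2)) hw hw'
  refine ⟨⟨normOneToSL b ⟨x, hx⟩, ⟨x, hx⟩, rfl⟩, ?_⟩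
  rw [Subgroup.smul_def, normOneToSL_smul_mk b _ hw]
  exact (mk_eq_mk_iff' K _ _ _ _).mpr ⟨a, by rw [← map_smul, ← hxa]⟩

end NonsplitTorus

lemma exists_subgroup_isPretransitive_free_of_charTwo (K : Type*) [Field K] [Finite K]
    [CharP K 2] : ∃ C : Subgroup (Matrix.SpecialLinearGroup (Fin 2) K),
      IsPretransitive C (Proj K) ∧ (∀ c ∈ C, ∀ y : Proj K, c • y = y → c = 1) ∧
        ∀ c ∈ C, c * c = 1 → c = 1 := by
  let L := FiniteField.Extension K 2 2
  let b : Module.Basis (Fin 2) K L :=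
    Module.finBasisOfFinrankEq K L (FiniteField.finrank_extension K 2 2)
  refine ⟨(normOneToSL b).range, isPretransitive_range_normOneToSL b, ?_, ?_⟩
  · rintro _ ⟨x, rfl⟩ y hy
    rw [eq_one_of_normOneToSL_smul_eq_self b x hy, map_one]
  · rintro _ ⟨x, rfl⟩ hx
    rw [eq_one_of_normOneToSL_mul_self_eq_one b x hx, map_one]

/-- For `q = 2^m` with `m ≥ 1`, the maximum size of an intersecting subset of
`SL(2, F_q) ≅ PSL(2, q) = PGL(2, q)` for the action on 2-element subsets of the projective line
is exactly `q(q-1)`. -/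
theorem max_intersecting_sl2_two_subsets_power_of_two (m : ℕ) (hm : 1 ≤ m) :
    IsGreatest {n : ℕ |
        ∃ F : Set (Matrix.SpecialLinearGroup (Fin 2) (GaloisField 2 m)),
          IntersectingOnSubsets _ (GaloisField 2 m) 2 F ∧ F.ncard = n}
      (2 ^ m * (2 ^ m - 1)) := by
  set K := GaloisField 2 m
  have hB : Nat.card (stabilizer (Matrix.SpecialLinearGroup (Fin 2) K) (infinityPoint K)) =
      2 ^ m * (2 ^ m - 1) := by
    rw [card_stabilizer_infinityPoint, GaloisField.card 2 m (by omega)]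
  obtain ⟨C, _, hfree, hinv⟩ := exists_subgroup_isPretransitive_free_of_charTwo K
  refine ⟨⟨_, IntersectingOnSubsets.of_subgroup
    fun _ hc => exists_ncard_eq_two_smul_eq_of_mem_stabilizer_infinityPoint hc, ?_⟩, ?_⟩
  · rw [← hB, ← Nat.card_coe_set_eq]
    rfl
  · rintro _ ⟨F, hF, rfl⟩
    exact hB ▸ hF.ncard_le_card_stabilizer hfree hinv (infinityPoint K)
end

section
/- The group PSL(2,F_7) contains a subgroup of order 12 (isomorphic to Alt(4)) that is an intersecting set with respect to the induced action on 2-element subsets of ℙ¹(F_7), and the group PSL(2,F_31) contains a subgroup of order 60 (isomorphic to Alt(5)) that is an intersecting set with respect to the induced action on 2-element subsets of ℙ¹(F_31). In particular, the intersection density of each of these two actions is at least 2. -/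
open scoped Pointwise MatrixGroups

instance : Fact (Nat.Prime 7) := ⟨by norm_num⟩
instance : Fact (Nat.Prime 31) := ⟨by norm_num⟩


section IntersectingInfra
set_option maxRecDepth 40000
set_option synthInstance.maxHeartbeats 1000000
set_option maxHeartbeats 4000000

instance altDecPred (n : ℕ) : DecidablePred (· ∈ alternatingGroup (Fin n)) := fun σ =>
  decidable_of_iff (Equiv.Perm.sign σ = 1) (Equiv.Perm.mem_alternatingGroup).symm

variable {K : Type*} [Field K]

lemma GL_mem_center_iff (c : GL (Fin 2) K) :
    c ∈ Subgroup.center (GL (Fin 2) K) ↔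
      ((c : Matrix (Fin 2) (Fin 2) K) 0 1 = 0 ∧ (c : Matrix (Fin 2) (Fin 2) K) 1 0 = 0 ∧
        (c : Matrix (Fin 2) (Fin 2) K) 0 0 = (c : Matrix (Fin 2) (Fin 2) K) 1 1) := by
  constructor
  · intro hc
    have hcomm : ∀ t : Matrix.TransvectionStruct (Fin 2) K,
        Commute t.toMatrix (c : Matrix (Fin 2) (Fin 2) K) := by
      intro t
      let u : GL (Fin 2) K := ⟨t.toMatrix, t.inv.toMatrix, t.mul_inv, t.inv_mul⟩
      have h := Subgroup.mem_center_iff.mp hc u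
      have := congrArg Units.val h
      simpa [u, Commute, SemiconjBy] using this
    obtain ⟨r, hr⟩ := Matrix.mem_range_scalar_of_commute_transvectionStruct hcomm
    refine ⟨?_, ?_, ?_⟩ <;> rw [← hr] <;> simp [Matrix.scalar_apply, Matrix.diagonal]
  · rintro ⟨h1, h2, h3⟩
    rw [Subgroup.mem_center_iff]
    intro g
    apply Units.ext
    have hc : (c : Matrix (Fin 2) (Fin 2) K) = ((c : Matrix (Fin 2) (Fin 2) K) 0 0) • 1 := by
      ext i j
      fin_cases i <;> fin_cases j <;> simp [Matrix.one_apply, h1, h2, h3]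
    show (g : Matrix (Fin 2) (Fin 2) K) * c = (c : Matrix (Fin 2) (Fin 2) K) * g
    rw [hc, Matrix.mul_smul, Matrix.smul_mul, mul_one, one_mul]

instance (priority := 2000) PGL2.decEq [DecidableEq K] : DecidableEq (PGL2 K) := fun x y =>
  Quotient.recOnSubsingleton₂ x y fun a b =>
    decidable_of_iff _ (((GL_mem_center_iff (a⁻¹ * b)).symm).trans (QuotientGroup.eq).symm)

lemma GLneg_mem_center : (-1 : GL (Fin 2) K) ∈ Subgroup.center (GL (Fin 2) K) := by
  rw [GL_mem_center_iff]
  refine ⟨?_, ?_, ?_⟩ <;> simp [Units.val_neg, Units.val_one, Matrix.one_apply]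

lemma PGL2_mk_neg (g : GL (Fin 2) K) :
    (QuotientGroup.mk (-g) : PGL2 K) = QuotientGroup.mk g := by
  have h : (-g) = (-1) * g := by rw [neg_one_mul]
  have h1 : (QuotientGroup.mk (-1 : GL (Fin 2) K) : PGL2 K) = 1 :=
    (QuotientGroup.eq_one_iff _).mpr GLneg_mem_center
  rw [h, QuotientGroup.mk_mul, h1, one_mul]

/-- `g` stabilizes some 2-element subset of `X`. -/
def HasFix2 {G : Type*} [Group G] (X : Type*) [MulAction G X] (g : G) : Prop :=
  ∃ S : Set X, S.ncard = 2 ∧ g • S = S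

section HasFix2
variable {G X : Type*} [Group G] [MulAction G X]

lemma hasFix2_pair {g : G} {x y : X} (hxy : x ≠ y) (hx : g • x = x) (hy : g • y = y) :
    HasFix2 X g :=
  ⟨{x, y}, Set.ncard_pair hxy, by
    rw [Set.smul_set_insert, Set.smul_set_singleton, hx, hy]⟩

lemma hasFix2_of_sq {g : G} (h : g * g = 1) {x y : X} (hxy : x ≠ y) : HasFix2 X g := by
  by_cases hall : ∀ z : X, g • z = z
  · exact hasFix2_pair hxy (hall x) (hall y)
  · push_neg at hall
    obtain ⟨z, hz⟩ := hall
    have h2 : g • (g • z) = z := by rw [← mul_smul, h, one_smul]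
    refine ⟨{z, g • z}, Set.ncard_pair (Ne.symm hz), ?_⟩
    rw [Set.smul_set_insert, Set.smul_set_singleton, h2, Set.pair_comm]

lemma HasFix2.pow {g : G} (h : HasFix2 X g) (n : ℕ) : HasFix2 X (g ^ n) := by
  obtain ⟨S, hc, hS⟩ := h
  refine ⟨S, hc, ?_⟩
  induction n with
  | zero => simp
  | succ n ih => rw [pow_succ, mul_smul, hS, ih]

lemma HasFix2.conj {g : G} (h : HasFix2 X g) (t : G) : HasFix2 X (t * g * t⁻¹) := by
  obtain ⟨S, hc, hS⟩ := h
  exact ⟨t • S, by rw [Set.ncard_smul_set]; exact hc, by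
    rw [mul_smul, mul_smul, inv_smul_smul, hS]⟩

end HasFix2

/-- Two standard distinct points on the projective line. -/
def pt0 (K : Type*) [Field K] : Proj K :=
  Projectivization.mk K ![1, 0] (fun h => one_ne_zero (congrFun h 0))

def pt1 (K : Type*) [Field K] : Proj K :=
  Projectivization.mk K ![0, 1] (fun h => one_ne_zero (congrFun h 1))

lemma pt0_ne_pt1 : pt0 K ≠ pt1 K := by
  intro hEq
  rw [pt0, pt1, Projectivization.mk_eq_mk_iff] at hEq
  obtain ⟨a, ha⟩ := hEq
  have := congrFun ha 0
  simp [Units.smul_def] at this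

lemma intersecting_of_hasFix2 {G : Type*} [Group G] [MulAction G (Proj K)]
    (U : Subgroup G) (hU : ∀ u ∈ U, HasFix2 (Proj K) u) :
    IntersectingOnSubsets G K 2 (U : Set G) := by
  intro g hg h hh
  obtain ⟨S, hc, hS⟩ := hU (h⁻¹ * g) (mul_mem (inv_mem hh) hg)
  refine ⟨S, hc, ?_⟩
  rw [mul_smul] at hS
  calc g • S = h • (h⁻¹ • (g • S)) := (smul_inv_smul h (g • S)).symm
    _ = h • S := by rw [hS]

/-- Fixed point criterion: an eigenvector gives a fixed point in the projective line. -/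
lemma smul_mk_self (s : Matrix.SpecialLinearGroup (Fin 2) K) (v : Fin 2 → K) (hv : v ≠ 0)
    (a : Kˣ) (h : a • v = ((Matrix.SpecialLinearGroup.toGL s : GL (Fin 2) K) :
      Matrix (Fin 2) (Fin 2) K).mulVec v) :
    (QuotientGroup.mk (Matrix.SpecialLinearGroup.toGL s) : PGL2 K) •
      Projectivization.mk K v hv = Projectivization.mk K v hv := by
  rw [PGL2_smul_mk', GL_smul_mk, Projectivization.mk_eq_mk_iff]
  exact ⟨a, h⟩

end IntersectingInfra

section Seven
set_option maxRecDepth 40000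
set_option synthInstance.maxHeartbeats 1000000
set_option maxHeartbeats 4000000

def key4 (σ : Equiv.Perm (Fin 4)) : ℕ := (σ 0).val + 4 * (σ 1).val + 16 * (σ 2).val

def tbl7 (k : Nat) : Matrix (Fin 2) (Fin 2) (ZMod 7) :=
    if k = 7 then !![2, 5; 5, 6] else
    if k = 9 then !![2, 0; 0, 4] else
    if k = 14 then !![3, 2; 2, 4] else
    if k = 18 then !![3, 0; 0, 5] else
    if k = 27 then !![3, 4; 1, 4] else
    if k = 28 then !![1, 3; 6, 5] else
    if k = 35 then !![1, 6; 3, 5] else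
    if k = 36 then !![1, 0; 0, 1] else
    if k = 45 then !![2, 6; 3, 6] else
    if k = 49 then !![3, 1; 4, 4] else
    if k = 54 then !![1, 5; 5, 5] else
    if k = 56 then !![2, 3; 6, 6] else
    1

lemma det_tbl7 : ∀ σ : alternatingGroup (Fin 4), (tbl7 (key4 σ.1)).det = 1 := by decide

def f7 (σ : alternatingGroup (Fin 4)) : Matrix.SpecialLinearGroup (Fin 2) (ZMod 7) :=
  ⟨tbl7 (key4 σ.1), det_tbl7 σ⟩

def φraw7 (σ : alternatingGroup (Fin 4)) : PGL2 (ZMod 7) :=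
  QuotientGroup.mk (Matrix.SpecialLinearGroup.toGL (f7 σ))

lemma φraw7_mul : ∀ a b : alternatingGroup (Fin 4),
    φraw7 (a * b) = φraw7 a * φraw7 b := by decide

lemma φraw7_inj : ∀ a : alternatingGroup (Fin 4), φraw7 a = 1 → a = 1 := by decide

def φ7 : alternatingGroup (Fin 4) →* ↥(PSL2 (ZMod 7)) :=
  MonoidHom.mk' (fun σ => ⟨φraw7 σ, ⟨f7 σ, rfl⟩⟩) (fun a b => Subtype.ext (φraw7_mul a b))

lemma φ7_injective : Function.Injective φ7 :=
  (injective_iff_map_eq_one φ7).mpr fun a h => φraw7_inj a (congrArg Subtype.val h)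

def c3₄ : alternatingGroup (Fin 4) := ⟨Equiv.swap 0 1 * Equiv.swap 1 2, by decide⟩

lemma factA4 : ∀ σ : alternatingGroup (Fin 4), σ * σ = 1 ∨
    ∃ τ : alternatingGroup (Fin 4), ∃ k : Fin 4, σ = τ * c3₄ ^ (k : ℕ) * τ⁻¹ := by decide

lemma fix7a : φ7 c3₄ • pt0 (ZMod 7) = pt0 (ZMod 7) :=
  smul_mk_self (f7 c3₄) ![1, 0] _ (Units.mk0 (2 : ZMod 7) (by decide)) (by decide)

lemma fix7b : φ7 c3₄ • pt1 (ZMod 7) = pt1 (ZMod 7) :=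
  smul_mk_self (f7 c3₄) ![0, 1] _ (Units.mk0 (4 : ZMod 7) (by decide)) (by decide)

lemma hasFix2_all7 : ∀ σ : alternatingGroup (Fin 4), HasFix2 (Proj (ZMod 7)) (φ7 σ) := by
  intro σ
  rcases factA4 σ with h | ⟨τ, k, rfl⟩
  · exact hasFix2_of_sq (by rw [← map_mul, h, map_one]) pt0_ne_pt1
  · have base : HasFix2 (Proj (ZMod 7)) (φ7 c3₄) := hasFix2_pair pt0_ne_pt1 fix7a fix7b
    have := (base.pow (k : ℕ)).conj (φ7 τ)
    rw [map_mul, map_mul, map_pow, map_inv]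
    exact this

end Seven

section ThirtyOne
set_option maxRecDepth 40000
set_option synthInstance.maxHeartbeats 1000000
set_option maxHeartbeats 4000000

def dig (k i : ℕ) : ℕ := k / 5 ^ i % 5

def key5 (σ : Equiv.Perm (Fin 5)) : ℕ :=
  (σ 0).val + 5 * (σ 1).val + 25 * (σ 2).val + 125 * (σ 3).val + 625 * (σ 4).val

def keymul5 (k1 k2 : ℕ) : ℕ :=
  dig k1 (dig k2 0) + 5 * dig k1 (dig k2 1) + 25 * dig k1 (dig k2 2) +
    125 * dig k1 (dig k2 3) + 625 * dig k1 (dig k2 4)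

def keys31 : List ℕ := [194, 222, 238, 298, 334, 366, 414, 446, 482, 542, 558, 586, 698, 714, 742, 894, 970, 978, 1022, 1054, 1110, 1138, 1190, 1202, 1294, 1346, 1358, 1398, 1454, 1490, 1634, 1670, 1726, 1766, 1778, 1830, 1922, 1934, 1986, 2014, 2070, 2102, 2146, 2154, 2230, 2382, 2410, 2426, 2538, 2566, 2582, 2642, 2678, 2710, 2758, 2790, 2826, 2886, 2902, 2930]
def tblN31 (k : ℕ) : ℕ × ℕ × ℕ × ℕ :=
  if k = 194 then (0, 6, 5, 0) else
  if k = 222 then (13, 19, 5, 5) else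
  if k = 238 then (13, 25, 10, 5) else
  if k = 298 then (15, 27, 24, 4) else
  if k = 334 then (11, 19, 5, 20) else
  if k = 366 then (4, 8, 19, 15) else
  if k = 414 then (11, 25, 10, 20) else
  if k = 446 then (2, 8, 19, 30) else
  if k = 482 then (9, 17, 22, 21) else
  if k = 542 then (4, 2, 14, 15) else
  if k = 558 then (2, 2, 14, 30) else
  if k = 586 then (2, 0, 0, 16) else
  if k = 698 then (8, 4, 7, 23) else
  if k = 714 then (4, 4, 7, 15) else
  if k = 742 then (4, 0, 0, 8) else
  if k = 894 then (5, 12, 26, 13) else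
  if k = 970 then (0, 12, 18, 0) else
  if k = 978 then (5, 24, 13, 13) else
  if k = 1022 then (8, 16, 25, 23) else
  if k = 1054 then (1, 8, 19, 29) else
  if k = 1110 then (9, 24, 13, 21) else
  if k = 1138 then (13, 28, 20, 5) else
  if k = 1190 then (9, 12, 26, 21) else
  if k = 1202 then (4, 16, 25, 15) else
  if k = 1294 then (5, 6, 21, 13) else
  if k = 1346 then (13, 7, 18, 5) else
  if k = 1358 then (8, 1, 28, 23) else
  if k = 1398 then (8, 0, 0, 4) else
  if k = 1454 then (15, 23, 12, 4) else
  if k = 1490 then (8, 8, 19, 23) else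
  if k = 1634 then (10, 17, 22, 22) else
  if k = 1670 then (10, 24, 13, 22) else
  if k = 1726 then (0, 7, 22, 0) else
  if k = 1766 then (13, 14, 9, 5) else
  if k = 1778 then (15, 30, 3, 4) else
  if k = 1830 then (2, 16, 25, 30) else
  if k = 1922 then (5, 3, 11, 13) else
  if k = 1934 then (1, 2, 14, 29) else
  if k = 1986 then (4, 1, 28, 15) else
  if k = 2014 then (15, 29, 17, 4) else
  if k = 2070 then (10, 12, 26, 22) else
  if k = 2102 then (5, 17, 22, 13) else
  if k = 2146 then (15, 15, 6, 4) else
  if k = 2154 then (15, 0, 0, 29) else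
  if k = 2230 then (1, 16, 25, 29) else
  if k = 2382 then (0, 14, 11, 0) else
  if k = 2410 then (11, 28, 20, 20) else
  if k = 2426 then (11, 14, 9, 20) else
  if k = 2538 then (0, 3, 10, 0) else
  if k = 2566 then (9, 6, 21, 21) else
  if k = 2582 then (9, 3, 11, 21) else
  if k = 2642 then (8, 2, 14, 23) else
  if k = 2678 then (10, 6, 21, 22) else
  if k = 2710 then (2, 4, 7, 30) else
  if k = 2758 then (10, 3, 11, 22) else
  if k = 2790 then (1, 4, 7, 29) else
  if k = 2826 then (11, 7, 18, 20) else
  if k = 2886 then (2, 1, 28, 30) else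
  if k = 2902 then (1, 1, 28, 29) else
  if k = 2930 then (1, 0, 0, 1) else
  (1, 0, 0, 1)

def mulN (q : ℕ) (m1 m2 : ℕ × ℕ × ℕ × ℕ) : ℕ × ℕ × ℕ × ℕ :=
  ((m1.1 * m2.1 + m1.2.1 * m2.2.2.1) % q, (m1.1 * m2.2.1 + m1.2.1 * m2.2.2.2) % q,
   (m1.2.2.1 * m2.1 + m1.2.2.2 * m2.2.2.1) % q, (m1.2.2.1 * m2.2.1 + m1.2.2.2 * m2.2.2.2) % q)

def negN (q : ℕ) (m : ℕ × ℕ × ℕ × ℕ) : ℕ × ℕ × ℕ × ℕ :=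
  ((q - m.1 % q) % q, (q - m.2.1 % q) % q, (q - m.2.2.1 % q) % q, (q - m.2.2.2 % q) % q)

def toM31 (m : ℕ × ℕ × ℕ × ℕ) : Matrix (Fin 2) (Fin 2) (ZMod 31) :=
  !![(m.1 : ZMod 31), (m.2.1 : ZMod 31); (m.2.2.1 : ZMod 31), (m.2.2.2 : ZMod 31)]

def tbl31 (k : ℕ) : Matrix (Fin 2) (Fin 2) (ZMod 31) := toM31 (tblN31 k)

lemma digF : ∀ σ : Equiv.Perm (Fin 5), ∀ i : Fin 5, dig (key5 σ) i.val = (σ i).val := by decide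

lemma key5_mul (σ τ : Equiv.Perm (Fin 5)) : key5 (σ * τ) = keymul5 (key5 σ) (key5 τ) := by
  have h0 : dig (key5 τ) 0 = (τ 0).val := digF τ 0
  have h1 : dig (key5 τ) 1 = (τ 1).val := digF τ 1
  have h2 : dig (key5 τ) 2 = (τ 2).val := digF τ 2
  have h3 : dig (key5 τ) 3 = (τ 3).val := digF τ 3
  have h4 : dig (key5 τ) 4 = (τ 4).val := digF τ 4
  simp only [keymul5]
  rw [h0, h1, h2, h3, h4, digF σ (τ 0), digF σ (τ 1), digF σ (τ 2), digF σ (τ 3), digF σ (τ 4)]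
  simp [key5, Equiv.Perm.mul_apply]

lemma key5_mem : ∀ a : alternatingGroup (Fin 5), key5 a.1 ∈ keys31 := by decide

lemma mul_check : ∀ k1 ∈ keys31, ∀ k2 ∈ keys31,
    tblN31 (keymul5 k1 k2) = mulN 31 (tblN31 k1) (tblN31 k2) ∨
    tblN31 (keymul5 k1 k2) = negN 31 (mulN 31 (tblN31 k1) (tblN31 k2)) := by decide

lemma det_check : ∀ k ∈ keys31,
    ((tblN31 k).1 * (tblN31 k).2.2.2) % 31 = (1 + (tblN31 k).2.1 * (tblN31 k).2.2.1) % 31 := by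
  decide

lemma natcast_mod31 (a : ℕ) : ((a % 31 : ℕ) : ZMod 31) = (a : ZMod 31) := ZMod.natCast_mod a 31

lemma negcast31 (a : ℕ) : (((31 - a % 31) % 31 : ℕ) : ZMod 31) = -(a : ZMod 31) := by
  rw [ZMod.natCast_mod, Nat.cast_sub (le_of_lt (Nat.mod_lt a (by norm_num))),
    ZMod.natCast_mod, ZMod.natCast_self, zero_sub]

lemma negcast31' (a : ℕ) : ((31 - a % 31 : ℕ) : ZMod 31) = -(a : ZMod 31) := by
  rw [Nat.cast_sub (le_of_lt (Nat.mod_lt a (by norm_num))),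
    ZMod.natCast_mod, ZMod.natCast_self, zero_sub]

lemma toM31_mulN (m1 m2 : ℕ × ℕ × ℕ × ℕ) : toM31 (mulN 31 m1 m2) = toM31 m1 * toM31 m2 := by
  obtain ⟨a, b, c, d⟩ := m1
  obtain ⟨e, f, g, h⟩ := m2
  simp only [toM31, mulN, Matrix.mul_fin_two, ZMod.natCast_mod]
  push_cast
  rfl

lemma toM31_negN (m : ℕ × ℕ × ℕ × ℕ) : toM31 (negN 31 m) = -(toM31 m) := by
  obtain ⟨a, b, c, d⟩ := m
  ext i j
  fin_cases i <;> fin_cases j <;>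
    simp [toM31, negN, Matrix.neg_apply] <;> exact negcast31' _

lemma det_tbl31 : ∀ a : alternatingGroup (Fin 5), (tbl31 (key5 a.1)).det = 1 := by
  intro a
  have h := congrArg (Nat.cast : ℕ → ZMod 31) (det_check _ (key5_mem a))
  rw [ZMod.natCast_mod, ZMod.natCast_mod] at h
  push_cast at h
  simp only [tbl31, toM31, Matrix.det_fin_two_of]
  rw [h]
  ring

def f31 (σ : alternatingGroup (Fin 5)) : Matrix.SpecialLinearGroup (Fin 2) (ZMod 31) :=
  ⟨tbl31 (key5 σ.1), det_tbl31 σ⟩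

def φraw31 (σ : alternatingGroup (Fin 5)) : PGL2 (ZMod 31) :=
  QuotientGroup.mk (Matrix.SpecialLinearGroup.toGL (f31 σ))

lemma φraw31_mul (a b : alternatingGroup (Fin 5)) :
    φraw31 (a * b) = φraw31 a * φraw31 b := by
  have hk : key5 ((a * b) : alternatingGroup (Fin 5)).1 = keymul5 (key5 a.1) (key5 b.1) :=
    key5_mul a.1 b.1
  rcases mul_check _ (key5_mem a) _ (key5_mem b) with h | h
  · have hf : f31 (a * b) = f31 a * f31 b := Subtype.ext (by
      show tbl31 (key5 ((a * b) : alternatingGroup (Fin 5)).1) = tbl31 (key5 a.1) * tbl31 (key5 b.1)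
      rw [hk, tbl31, h, toM31_mulN]
      rfl)
    show QuotientGroup.mk (Matrix.SpecialLinearGroup.toGL (f31 (a * b))) = _
    rw [hf, map_mul, QuotientGroup.mk_mul]
    rfl
  · have hneg : (f31 (a * b) : Matrix (Fin 2) (Fin 2) (ZMod 31)) =
        -((f31 a * f31 b : Matrix.SpecialLinearGroup (Fin 2) (ZMod 31)) :
          Matrix (Fin 2) (Fin 2) (ZMod 31)) := by
      show tbl31 (key5 ((a * b) : alternatingGroup (Fin 5)).1) =
        -(tbl31 (key5 a.1) * tbl31 (key5 b.1))
      rw [hk, tbl31, h, toM31_negN, toM31_mulN]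
      rfl
    have hGL : Matrix.SpecialLinearGroup.toGL (f31 (a * b)) =
        -(Matrix.SpecialLinearGroup.toGL (f31 a * f31 b)) := Units.ext (by
      simpa [Units.val_neg] using hneg)
    show QuotientGroup.mk (Matrix.SpecialLinearGroup.toGL (f31 (a * b))) = _
    rw [hGL, PGL2_mk_neg, map_mul, QuotientGroup.mk_mul]
    rfl

lemma φraw31_inj : ∀ a : alternatingGroup (Fin 5), φraw31 a = 1 → a = 1 := by decide

def φ31 : alternatingGroup (Fin 5) →* ↥(PSL2 (ZMod 31)) :=
  MonoidHom.mk' (fun σ => ⟨φraw31 σ, ⟨f31 σ, rfl⟩⟩) (fun a b => Subtype.ext (φraw31_mul a b))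

lemma φ31_injective : Function.Injective φ31 :=
  (injective_iff_map_eq_one φ31).mpr fun a h => φraw31_inj a (congrArg Subtype.val h)

def c3₅ : alternatingGroup (Fin 5) := ⟨Equiv.swap 0 1 * Equiv.swap 1 2, by decide⟩
def c5₅ : alternatingGroup (Fin 5) :=
  ⟨Equiv.swap 0 1 * Equiv.swap 1 2 * Equiv.swap 2 3 * Equiv.swap 3 4, by decide⟩

lemma factA5 : ∀ σ : alternatingGroup (Fin 5), σ * σ = 1 ∨
    ∃ τ : alternatingGroup (Fin 5), ∃ k : Fin 5,
      σ = τ * c3₅ ^ (k : ℕ) * τ⁻¹ ∨ σ = τ * c5₅ ^ (k : ℕ) * τ⁻¹ := by decide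

def w31a : Fin 2 → ZMod 31 := ![1, 4]
def w31b : Fin 2 → ZMod 31 := ![1, 24]

lemma w31a_ne : w31a ≠ 0 := by decide
lemma w31b_ne : w31b ≠ 0 := by decide

lemma w31_ne : Projectivization.mk (ZMod 31) w31a w31a_ne ≠
    Projectivization.mk (ZMod 31) w31b w31b_ne := by
  intro hEq
  rw [Projectivization.mk_eq_mk_iff] at hEq
  revert hEq
  decide

lemma fix31c3a : φ31 c3₅ • Projectivization.mk (ZMod 31) w31a w31a_ne =
    Projectivization.mk (ZMod 31) w31a w31a_ne :=
  smul_mk_self (f31 c3₅) w31a _ (Units.mk0 (6 : ZMod 31) (by decide)) (by decide)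

lemma fix31c3b : φ31 c3₅ • Projectivization.mk (ZMod 31) w31b w31b_ne =
    Projectivization.mk (ZMod 31) w31b w31b_ne :=
  smul_mk_self (f31 c3₅) w31b _ (Units.mk0 (26 : ZMod 31) (by decide)) (by decide)

lemma fix31c5a : φ31 c5₅ • pt0 (ZMod 31) = pt0 (ZMod 31) :=
  smul_mk_self (f31 c5₅) ![1, 0] _ (Units.mk0 (2 : ZMod 31) (by decide)) (by decide)

lemma fix31c5b : φ31 c5₅ • pt1 (ZMod 31) = pt1 (ZMod 31) :=
  smul_mk_self (f31 c5₅) ![0, 1] _ (Units.mk0 (16 : ZMod 31) (by decide)) (by decide)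

lemma hasFix2_all31 : ∀ σ : alternatingGroup (Fin 5), HasFix2 (Proj (ZMod 31)) (φ31 σ) := by
  intro σ
  rcases factA5 σ with h | ⟨τ, k, rfl | rfl⟩
  · exact hasFix2_of_sq (by rw [← map_mul, h, map_one]) pt0_ne_pt1
  · have base : HasFix2 (Proj (ZMod 31)) (φ31 c3₅) := hasFix2_pair w31_ne fix31c3a fix31c3b
    have := (base.pow (k : ℕ)).conj (φ31 τ)
    rw [map_mul, map_mul, map_pow, map_inv]
    exact this
  · have base : HasFix2 (Proj (ZMod 31)) (φ31 c5₅) := hasFix2_pair pt0_ne_pt1 fix31c5a fix31c5b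
    have := (base.pow (k : ℕ)).conj (φ31 τ)
    rw [map_mul, map_mul, map_pow, map_inv]
    exact this

end ThirtyOne

/-- `PSL(2, F_7)` contains a subgroup of order 12 isomorphic to `Alt(4)` that
is intersecting for the action on 2-element subsets of the projective line, and `PSL(2, F_31)`
contains a subgroup of order 60 isomorphic to `Alt(5)` that is intersecting for that action;
hence both actions have intersection density at least 2. -/
theorem psl2_seven_and_thirtyone_intersecting_subgroups :
    (∃ U : Subgroup (PSL2 (ZMod 7)),
      Nat.card U = 12 ∧ Nonempty (U ≃* alternatingGroup (Fin 4)) ∧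
      IntersectingOnSubsets _ (ZMod 7) 2 (U : Set (PSL2 (ZMod 7)))) ∧
    (∃ U : Subgroup (PSL2 (ZMod 31)),
      Nat.card U = 60 ∧ Nonempty (U ≃* alternatingGroup (Fin 5)) ∧
      IntersectingOnSubsets _ (ZMod 31) 2 (U : Set (PSL2 (ZMod 31)))) := by
  constructor
  · refine ⟨φ7.range, ?_, ?_, ?_⟩
    · have e : alternatingGroup (Fin 4) ≃* φ7.range := MonoidHom.ofInjective φ7_injective
      rw [← Nat.card_congr e.toEquiv]
      have h2 := two_mul_card_alternatingGroup (α := Fin 4)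
      rw [Fintype.card_perm, Fintype.card_fin] at h2
      have hfac : Nat.factorial 4 = 24 := by norm_num [Nat.factorial]
      rw [hfac, ← Nat.card_eq_fintype_card] at h2
      omega
    · exact ⟨(MonoidHom.ofInjective φ7_injective).symm⟩
    · refine intersecting_of_hasFix2 _ ?_
      intro u hu
      obtain ⟨σ, rfl⟩ := MonoidHom.mem_range.mp hu
      exact hasFix2_all7 σ
  · refine ⟨φ31.range, ?_, ?_, ?_⟩
    · have e : alternatingGroup (Fin 5) ≃* φ31.range := MonoidHom.ofInjective φ31_injective
      rw [← Nat.card_congr e.toEquiv]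
      have h2 := two_mul_card_alternatingGroup (α := Fin 5)
      rw [Fintype.card_perm, Fintype.card_fin] at h2
      have hfac : Nat.factorial 5 = 120 := by norm_num [Nat.factorial]
      rw [hfac, ← Nat.card_eq_fintype_card] at h2
      omega
    · exact ⟨(MonoidHom.ofInjective φ31_injective).symm⟩
    · refine intersecting_of_hasFix2 _ ?_
      intro u hu
      obtain ⟨σ, rfl⟩ := MonoidHom.mem_range.mp hu
      exact hasFix2_all31 σ
end

section
/- If ℓ and d are positive integers satisfying 3^ℓ + 1 = 2^d, then ℓ = 1 and d = 2. -/
lemma three_pow_mod8 (l : ℕ) : 3 ^ l % 8 = 1 ∨ 3 ^ l % 8 = 3 := by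
  induction l with
  | zero => simp
  | succ n ih =>
    rw [pow_succ, Nat.mul_mod]
    rcases ih with h | h <;> simp [h]

/-- (Special case of Mihăilescu's theorem.) If `ℓ, d ≥ 1` and
`3^ℓ + 1 = 2^d`, then `ℓ = 1` and `d = 2`. -/
theorem three_pow_add_one_eq_two_pow (l d : ℕ) (hl : 1 ≤ l) (hd : 1 ≤ d)
    (h : 3 ^ l + 1 = 2 ^ d) : l = 1 ∧ d = 2 := by
  have hd3 : d < 3 := by
    by_contra hc
    push_neg at hc
    obtain ⟨k, rfl⟩ : ∃ k, d = 3 + k := ⟨d - 3, by omega⟩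
    have h8 : 2 ^ (3 + k) % 8 = 0 := by
      rw [pow_add]; omega
    rcases three_pow_mod8 l with hm | hm <;> omega
  interval_cases d
  · have : 3 ^ l ≥ 3 := le_of_eq_of_le (pow_one 3).symm (Nat.pow_le_pow_right (by norm_num) hl)
    omega
  · have h3 : 3 ^ l = 3 ^ 1 := by norm_num; omega
    exact ⟨Nat.pow_right_injective (by norm_num) h3, rfl⟩
end
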